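/- Let T be a finite type set with |T| = m, let f be the uniform distribution on T, let O be a finite outcome set, and let v : T × O → ℝ≥0 be a valuation. For every ε ≥ 0 and every mechanism M on this data that is ε-EEIC and IR, there exists a mechanism M' on the same data that is BIC and IR and satisfies W(M') ≥ W(M) and R(M') ≥ R(M) − m·ε. -/

import Mathlib

open Finset

/-!
Let `u t s` be type `t`'s utility from reporting `s`. Pick a permutation `π` maximizing
`∑ t, u t (π t)` and give type `t` the allocation of report `π t`. Optimality of `π` against
`π * σ` for every permutation `σ` makes the weights `g t s = u t (π s) - u s (π s)` cyclically
monotone, so (Rochet) the largest weight `U t` of a simple path starting at `t` satisfies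
`g t s + U s ≤ U t`. Charging type `t` its value minus `U t` therefore gives a BIC mechanism in
which `t` gets utility `U t ≥ 0`. Comparing `π` with the identity shows that welfare does not
drop, and telescoping a path's weight against `max_s u a s` bounds `U t` by `u t (π t)` plus the
total EEIC loss, at most `m * ε`, which is therefore the largest revenue loss of any type.
-/

theorem List.map_formPerm_eq_rotate_one {α : Type*} [DecidableEq α] {l : List α}
    (hl : l.Nodup) : l.map l.formPerm = l.rotate 1 :=
  List.ext_getElem (by simp) fun i h _ => by
    rw [List.getElem_map, List.formPerm_apply_getElem _ hl, List.getElem_rotate]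

section PathWeight

variable {T : Type*} (g : T → T → ℝ)

def pathWeight : List T → ℝ
  | [] => 0
  | [_] => 0
  | a :: b :: l => g a b + pathWeight (b :: l)

@[simp] lemma pathWeight_nil : pathWeight g [] = 0 := rfl

@[simp] lemma pathWeight_singleton (a : T) : pathWeight g [a] = 0 := rfl

@[simp] lemma pathWeight_cons_cons (a b : T) (l : List T) :
    pathWeight g (a :: b :: l) = g a b + pathWeight g (b :: l) := rfl

lemma pathWeight_append_cons (A : List T) (y : T) (B : List T) :
    pathWeight g (A ++ y :: B) = pathWeight g (A ++ [y]) + pathWeight g (y :: B) := by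
  induction A with
  | nil => simp
  | cons a A ih =>
    rcases A with _ | ⟨b, A⟩
    · simp
    · simp only [List.cons_append, pathWeight_cons_cons] at ih ⊢
      rw [ih, add_assoc]

lemma pathWeight_concat (a : T) (l : List T) (y : T) :
    pathWeight g (a :: l ++ [y]) =
      pathWeight g (a :: l) + g ((a :: l).getLast (List.cons_ne_nil a l)) y := by
  induction l generalizing a with
  | nil => simp
  | cons b l ih =>
    simp only [List.cons_append, pathWeight_cons_cons] at ih ⊢
    rw [ih, List.getLast_cons_cons, add_assoc]

lemma pathWeight_append_singleton_eq_sum_zipWith (L : List T) (y : T) :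
    pathWeight g (L ++ [y]) = (List.zipWith g L (L.tail ++ [y])).sum := by
  induction L with
  | nil => simp
  | cons a L ih =>
    rcases L with _ | ⟨b, L⟩
    · simp
    · simp only [List.cons_append, pathWeight_cons_cons] at ih ⊢
      simp [ih]

lemma pathWeight_cycle_eq_sum_formPerm [DecidableEq T] {t : T} {l : List T}
    (h : (t :: l).Nodup) :
    pathWeight g (t :: l ++ [t]) = ∑ a ∈ (t :: l).toFinset, g a ((t :: l).formPerm a) := by
  rw [List.sum_toFinset _ h, pathWeight_append_singleton_eq_sum_zipWith, List.tail_cons,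
    ← List.rotate_zero (l ++ [t]), ← List.rotate_cons_succ, ← List.map_formPerm_eq_rotate_one h,
    List.zipWith_map_right, List.zipWith_self]

lemma pathWeight_cycle_nonpos [Fintype T] [DecidableEq T] (hdiag : ∀ a, g a a = 0)
    (hperm : ∀ σ : Equiv.Perm T, ∑ a, g a (σ a) ≤ 0) {t : T} {l : List T}
    (h : (t :: l).Nodup) : pathWeight g (t :: l ++ [t]) ≤ 0 := by
  rw [pathWeight_cycle_eq_sum_formPerm g h,
    Finset.sum_subset (Finset.subset_univ _) fun a _ ha => ?_]
  · exact hperm _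
  · rw [List.formPerm_apply_of_notMem (by simpa using ha), hdiag]

lemma pathWeight_le_of_le_sub {φ ψ : T → ℝ} (hg : ∀ a b, g a b ≤ φ a - ψ b)
    (hφ : ∀ a, 0 ≤ φ a) (a : T) (l : List T) :
    pathWeight g (a :: l) ≤ ψ a + ((a :: l).map fun b => φ b - ψ b).sum := by
  induction l generalizing a with
  | nil => simpa using hφ a
  | cons b l ih =>
    simp only [pathWeight_cons_cons, List.map_cons, List.sum_cons] at ih ⊢
    linarith [hg a b, ih b]

noncomputable def potential (t : T) : ℝ :=
  sSup ((fun l => pathWeight g (t :: l)) '' {l | (t :: l).Nodup})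

lemma potential_le {t : T} {B : ℝ} (h : ∀ l, (t :: l).Nodup → pathWeight g (t :: l) ≤ B) :
    potential g t ≤ B :=
  csSup_le ⟨_, [], List.nodup_singleton t, rfl⟩ (Set.forall_mem_image.2 h)

lemma le_potential [Finite T] {t : T} {l : List T} (h : (t :: l).Nodup) :
    pathWeight g (t :: l) ≤ potential g t := by
  classical
  have : Fintype T := Fintype.ofFinite T
  have hfin : {l : List T | (t :: l).Nodup}.Finite :=
    (Set.finite_coe_iff.mp (inferInstance : Finite {l : List T // l.Nodup})).subset
      fun l hl => List.Nodup.of_cons hl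
  exact le_csSup (hfin.image _).bddAbove ⟨l, h, rfl⟩

lemma potential_nonneg [Finite T] (t : T) : 0 ≤ potential g t :=
  le_potential g (List.nodup_singleton t)

variable {g}

lemma add_potential_le [Finite T]
    (hcyc : ∀ t l, (t :: l).Nodup → pathWeight g (t :: l ++ [t]) ≤ 0) (t s : T) :
    g t s + potential g s ≤ potential g t := by
  rw [← le_sub_iff_add_le']
  refine potential_le g fun l hl => ?_
  by_cases ht : t ∈ s :: l
  · -- the part of the path before `t`, closed up by the edge `t → s`, is a simple cycle
    obtain ⟨A, B, hAB⟩ := List.append_of_mem ht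
    rw [hAB] at hl ⊢
    have hcycle := hcyc t A
      ((List.nodup_middle.1 hl).sublist ((List.sublist_append_left A B).cons_cons t))
    have hpath := le_potential g (hl.sublist (List.sublist_append_right A (t :: B)))
    have hclose : pathWeight g (t :: A ++ [t]) = g t s + pathWeight g (A ++ [t]) := by
      rcases A with _ | ⟨a, A⟩ <;> simp_all
    rw [pathWeight_append_cons]
    linarith
  · have := le_potential g (List.nodup_cons.2 ⟨ht, hl⟩)
    rw [pathWeight_cons_cons] at this
    linarith

lemma potential_le_of_cycle (hcyc : ∀ t l, (t :: l).Nodup → pathWeight g (t :: l ++ [t]) ≤ 0)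
    {t : T} {B : ℝ} (hB : ∀ e, 0 ≤ g e t + B) : potential g t ≤ B := by
  refine potential_le g fun l hl => ?_
  have := hcyc t l hl
  rw [pathWeight_concat] at this
  linarith [hB ((t :: l).getLast (List.cons_ne_nil t l))]

lemma potential_le_of_le_sub [Fintype T] {φ ψ : T → ℝ} (hg : ∀ a b, g a b ≤ φ a - ψ b)
    (hφ : ∀ a, 0 ≤ φ a) (hψ : ∀ a, ψ a ≤ φ a) (t : T) :
    potential g t ≤ ψ t + ∑ a, (φ a - ψ a) := by
  classical
  refine potential_le g fun l hl => (pathWeight_le_of_le_sub g hg hφ t l).trans ?_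
  rw [← List.sum_toFinset _ hl]
  gcongr
  · exact fun a _ _ => sub_nonneg.2 (hψ a)
  · exact Finset.subset_univ _

end PathWeight

theorem exists_perm_potential {T : Type*} [Fintype T] [Nonempty T] (u : T → T → ℝ) (c : T → ℝ)
    (hc : ∀ e s, c s ≤ u e s) (hIR : ∀ t, 0 ≤ u t t) :
    ∃ (π : Equiv.Perm T) (U : T → ℝ), ∑ t, u t t ≤ ∑ t, u t (π t) ∧ (∀ t, 0 ≤ U t) ∧
      (∀ t s, u t (π s) - u s (π s) + U s ≤ U t) ∧ (∀ t, U t ≤ u t (π t) - c (π t)) ∧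
      ∀ t, U t ≤ u t (π t) + ∑ s, (univ.sup' univ_nonempty (u s) - u s s) := by
  classical
  obtain ⟨π, hπ⟩ := Finite.exists_max fun σ : Equiv.Perm T => ∑ t, u t (σ t)
  set g : T → T → ℝ := fun t s => u t (π s) - u s (π s)
  have hcyc : ∀ t l, (t :: l).Nodup → pathWeight g (t :: l ++ [t]) ≤ 0 := by
    refine fun t l => pathWeight_cycle_nonpos g (fun a => sub_self _) fun σ => ?_
    rw [sum_sub_distrib, Equiv.sum_comp σ fun a => u a (π a), sub_nonpos]
    exact hπ (π * σ)
  have hid : ∑ t, u t t ≤ ∑ t, u t (π t) := hπ 1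
  refine ⟨π, potential g, hid, potential_nonneg g, add_potential_le hcyc,
    fun t => potential_le_of_cycle hcyc fun e => ?_, fun t => ?_⟩
  · linarith [hc e (π t)]
  · have hsup : ∀ a b, u a b ≤ univ.sup' univ_nonempty (u a) := fun a b =>
      le_sup' (u a) (mem_univ b)
    calc potential g t ≤ u t (π t) + ∑ s, (univ.sup' univ_nonempty (u s) - u s (π s)) :=
          potential_le_of_le_sub (fun a b => by linarith [hsup a (π b)])
            (fun a => (hIR a).trans (hsup a a)) (fun a => hsup a (π a)) t
      _ ≤ u t (π t) + ∑ s, (univ.sup' univ_nonempty (u s) - u s s) := by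
          simp only [sum_sub_distrib]
          linarith

theorem epsEEIC_to_BIC_uniform_general
    {T O : Type} [Fintype T] [Fintype O] [Nonempty T]
    (m : ℕ) (hm : Fintype.card T = m)
    (v : T → O → ℝ) (hv : ∀ t o, 0 ≤ v t o)
    (ε : ℝ)
    (x : T → O → ℝ) (p : T → ℝ)
    (hx0 : ∀ t o, 0 ≤ x t o) (hx1 : ∀ t, ∑ o, x t o = 1)
    -- M is ε-EEIC
    (hEEIC : ∑ t, (1 / (m : ℝ)) *
        ((Finset.univ.sup' Finset.univ_nonempty fun t' => (∑ o, x t' o * v t o) - p t')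
          - ((∑ o, x t o * v t o) - p t)) ≤ ε)
    -- M is IR
    (hIR : ∀ t : T, 0 ≤ (∑ o, x t o * v t o) - p t) :
    ∃ (x' : T → O → ℝ) (p' : T → ℝ),
      (∀ t o, 0 ≤ x' t o) ∧ (∀ t, ∑ o, x' t o = 1) ∧ (∀ t, 0 ≤ p' t) ∧
      -- M' is BIC
      (∀ t t' : T,
        (∑ o, x' t o * v t o) - p' t ≥ (∑ o, x' t' o * v t o) - p' t') ∧
      -- M' is IR
      (∀ t : T, 0 ≤ (∑ o, x' t o * v t o) - p' t) ∧
      -- W(M') ≥ W(M)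
      (∑ t, (1 / (m : ℝ)) * ∑ o, x' t o * v t o)
        ≥ (∑ t, (1 / (m : ℝ)) * ∑ o, x t o * v t o) ∧
      -- R(M') ≥ R(M) − m·ε
      (∑ t, (1 / (m : ℝ)) * p' t) ≥ (∑ t, (1 / (m : ℝ)) * p t) - m * ε := by
  have hm0 : (0 : ℝ) < m := by rw [← hm]; exact_mod_cast Fintype.card_pos
  obtain ⟨π, U, hwelfare, hU0, hUbic, hUpay, hUrev⟩ :=
    exists_perm_potential (fun t s => (∑ o, x s o * v t o) - p s) (fun s => -p s)
      (fun e s => by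
        linarith [sum_nonneg fun o (_ : o ∈ univ) => mul_nonneg (hx0 s o) (hv e o)]) hIR
  set D := ∑ s, (univ.sup' univ_nonempty (fun t' => (∑ o, x t' o * v s o) - p t')
    - ((∑ o, x s o * v s o) - p s))
  have hD : D ≤ m * ε := by
    rwa [← mul_sum, one_div, inv_mul_le_iff₀ hm0] at hEEIC
  have hp_perm : ∑ t, p (π t) = ∑ t, p t := Equiv.sum_comp π p
  refine ⟨fun t => x (π t), fun t => (∑ o, x (π t) o * v t o) - U t, fun t o => hx0 _ _,
    fun t => hx1 _, fun t => by linarith [hUpay t], fun t s => by linarith [hUbic t s],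
    fun t => by linarith [hU0 t], ?_, ?_⟩
  · rw [ge_iff_le, ← mul_sum, ← mul_sum]
    simp only [sum_sub_distrib] at hwelfare
    exact mul_le_mul_of_nonneg_left (by linarith) (by positivity)
  · have hrev : ∑ t, p t - m * D ≤ ∑ t, ((∑ o, x (π t) o * v t o) - U t) := by
      have := sum_le_sum fun t (_ : t ∈ univ) => (by linarith [hUrev t] :
        p (π t) - D ≤ (∑ o, x (π t) o * v t o) - U t)
      rwa [sum_sub_distrib, hp_perm, sum_const, card_univ, hm, nsmul_eq_mul] at this
    have := mul_le_mul_of_nonneg_left hrev (by positivity : (0 : ℝ) ≤ 1 / m)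
    rw [mul_sub, ← mul_assoc, one_div_mul_cancel hm0.ne', one_mul] at this
    rw [ge_iff_le, ← mul_sum, ← mul_sum]
    linarith

/-- For a single agent with uniform type distribution over `m` types,
every `ε`-EEIC and IR mechanism can be transformed into a BIC and IR mechanism with
at least the same expected social welfare and expected revenue loss at most `m·ε`. -/
theorem epsEEIC_to_BIC_uniform
    {T O : Type} [Fintype T] [Fintype O] [Nonempty T]
    (m : ℕ) (hm : Fintype.card T = m)
    (v : T → O → ℝ) (hv : ∀ t o, 0 ≤ v t o)
    (ε : ℝ) (hε : 0 ≤ ε)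
    (x : T → O → ℝ) (p : T → ℝ)
    (hx0 : ∀ t o, 0 ≤ x t o) (hx1 : ∀ t, ∑ o, x t o = 1)
    (hp : ∀ t, 0 ≤ p t)
    -- M is ε-EEIC
    (hEEIC : ∑ t, (1 / (m : ℝ)) *
        ((Finset.univ.sup' Finset.univ_nonempty fun t' => (∑ o, x t' o * v t o) - p t')
          - ((∑ o, x t o * v t o) - p t)) ≤ ε)
    -- M is IR
    (hIR : ∀ t : T, 0 ≤ (∑ o, x t o * v t o) - p t) :
    ∃ (x' : T → O → ℝ) (p' : T → ℝ),
      (∀ t o, 0 ≤ x' t o) ∧ (∀ t, ∑ o, x' t o = 1) ∧ (∀ t, 0 ≤ p' t) ∧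
      -- M' is BIC
      (∀ t t' : T,
        (∑ o, x' t o * v t o) - p' t ≥ (∑ o, x' t' o * v t o) - p' t') ∧
      -- M' is IR
      (∀ t : T, 0 ≤ (∑ o, x' t o * v t o) - p' t) ∧
      -- W(M') ≥ W(M)
      (∑ t, (1 / (m : ℝ)) * ∑ o, x' t o * v t o)
        ≥ (∑ t, (1 / (m : ℝ)) * ∑ o, x t o * v t o) ∧
      -- R(M') ≥ R(M) − m·ε
      (∑ t, (1 / (m : ℝ)) * p' t) ≥ (∑ t, (1 / (m : ℝ)) * p t) - m * ε :=
  epsEEIC_to_BIC_uniform_general m hm v hv ε x p hx0 hx1 hEEIC hIR
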